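/- Let M be a finitely generated free ℤ-module equipped with a symmetric bilinear form B : M × M → ℤ that is unimodular (the induced map M → Hom(M, ℤ), x ↦ B(x, ·), is bijective) and even (B(x, x) is even for every x ∈ M). Then for every primitive vector E ∈ M with B(E, E) = 0 there exists F ∈ M with B(F, F) = 0 and B(E, F) = 1. -/
import Mathlib


/-- Every even unimodular lattice contains, for each primitive isotropic vector `E`,
an isotropic vector `F` with `B E F = 1`. -/
theorem primitive_isotropic_hyperbolic_pair
    (M : Type*) [AddCommGroup M] [Module ℤ M] [Module.Free ℤ M] [Module.Finite ℤ M]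
    (B : M →ₗ[ℤ] M →ₗ[ℤ] ℤ)
    (hsymm : ∀ x y : M, B x y = B y x)
    (hunimod : Function.Bijective fun x : M => B x)
    (heven : ∀ x : M, Even (B x x))
    (E : M) (hE0 : E ≠ 0)
    (hprim : ∀ (d : ℤ) (x : M), E = d • x → IsUnit d)
    (hEE : B E E = 0) :
    ∃ F : M, B F F = 0 ∧ B E F = 1 := by
  classical
  obtain ⟨d, hd⟩ : (LinearMap.range (B E)).IsPrincipal := inferInstance
  have hdvd : ∀ m : M, d ∣ B E m := by
    intro m
    have hm : B E m ∈ LinearMap.range (B E) := ⟨m, rfl⟩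
    rw [hd] at hm
    obtain ⟨c, hc⟩ := Submodule.mem_span_singleton.mp hm
    exact ⟨c, by rw [← hc]; simp [mul_comm]⟩
  -- divide B E by d to get ψ with d • ψ = B E
  let ψ : M →ₗ[ℤ] ℤ :=
    { toFun := fun m => B E m / d
      map_add' := by
        intro a b
        show B E (a + b) / d = B E a / d + B E b / d
        rw [map_add, Int.add_ediv_of_dvd_left (hdvd a)]
      map_smul' := by
        intro r a
        simp only [RingHom.id_apply, smul_eq_mul, map_smul, map_zsmul]
        exact Int.mul_ediv_assoc r (hdvd a) }
  have hψ : d • ψ = B E := by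
    ext m
    exact Int.mul_ediv_cancel' (hdvd m)
  obtain ⟨x, hx⟩ := hunimod.2 ψ
  have hx' : B x = ψ := hx
  have hEd : E = d • x := by
    apply hunimod.1
    show B E = B (d • x)
    rw [map_zsmul B d x, hx', hψ]
  have hdunit : IsUnit d := hprim d x hEd
  have h1 : (1 : ℤ) ∈ LinearMap.range (B E) := by
    rw [hd, Submodule.mem_span_singleton]
    obtain ⟨u, rfl⟩ := hdunit
    exact ⟨(u⁻¹ : ℤˣ), by simp [Units.smul_def]⟩
  obtain ⟨G, hG⟩ := h1
  obtain ⟨k, hk⟩ := heven G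
  have hGE : B G E = 1 := by rw [hsymm]; exact hG
  have key : ∀ (a b : M) (c : ℤ),
      B (a - c • b) (a - c • b) = B a a - c * B a b - c * B b a + c * c * B b b := by
    intro a b c
    simp only [map_sub, map_smul, map_zsmul, LinearMap.sub_apply, LinearMap.smul_apply,
      smul_eq_mul]
    ring
  refine ⟨G - k • E, ?_, ?_⟩
  · rw [key, hk, hEE, hGE, hG]; ring
  · simp only [map_sub, map_smul, map_zsmul, smul_eq_mul, hG, hEE]; ring
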